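/- arXiv:1802.02628 — 2 statements merged into one kernel-verified Lean document; each statement's English description precedes it below -/
import Mathlib

section
/- Let X ∈ 𝔻ℙ_n and let G ∈ ℝ^{n×n} (the Euclidean gradient of an objective function at X). Suppose α, β ∈ ℝⁿ satisfy (G ⊙ X)𝟙 = α + Xβ and (G ⊙ X)ᵀ𝟙 = Xᵀα + β, and set grad = (G ⊙ X) − (α𝟙ᵀ + 𝟙βᵀ) ⊙ X. Then for every ξ ∈ ℝ^{n×n} with ξ𝟙 = 0 and ξᵀ𝟙 = 0, the Fisher inner product ⟨grad, ξ⟩_X equals the Frobenius inner product Σ_{i,j} G_{ij} ξ_{ij}. In other words, the Riemannian gradient on 𝔻ℙ_n is grad f(X) = Π_X(Grad f(X) ⊙ X). -/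
open Matrix

/-!
Dividing by `X` entrywise undoes the Hadamard factor `⊙ X`, so the Fisher inner product of
`(G - (α𝟙ᵀ + 𝟙βᵀ)) ⊙ X` with `ξ` is the Frobenius inner product of `G - (α𝟙ᵀ + 𝟙βᵀ)` with `ξ`.
The correction term contributes `α ⬝ (ξ𝟙) + β ⬝ (ξᵀ𝟙)`, which vanishes for tangent `ξ`.
-/

namespace Matrix

variable {m n R : Type*}

theorem sub_hadamard [NonUnitalNonAssocRing R] (A B C : Matrix m n R) :
    (A - B) ⊙ C = A ⊙ C - B ⊙ C :=
  ext fun _ _ => sub_mul _ _ _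

variable [Fintype m] [Fintype n]

theorem sum_sum_hadamard_mul_div [Field R] {X : Matrix m n R} (hX : ∀ i j, X i j ≠ 0)
    (A ξ : Matrix m n R) :
    ∑ i, ∑ j, (A ⊙ X) i j * ξ i j / X i j = ∑ i, ∑ j, A i j * ξ i j := by
  refine Finset.sum_congr rfl fun i _ => Finset.sum_congr rfl fun j _ => ?_
  rw [hadamard_apply, mul_right_comm, mul_div_cancel_right₀ _ (hX i j)]

theorem sum_sum_vecMulVec_mul [CommSemiring R] (u : m → R) (v : n → R) (ξ : Matrix m n R) :
    ∑ i, ∑ j, vecMulVec u v i j * ξ i j = u ⬝ᵥ (ξ *ᵥ v) := by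
  simp only [vecMulVec_apply, dotProduct, mulVec, Finset.mul_sum]
  exact Finset.sum_congr rfl fun i _ => Finset.sum_congr rfl fun j _ => by ring

theorem sum_sum_vecMulVec_add_vecMulVec_mul_eq_zero [CommSemiring R] (α : m → R) (β : n → R)
    {ξ : Matrix m n R} (hrow : ξ *ᵥ (fun _ => 1) = 0) (hcol : ξᵀ *ᵥ (fun _ => 1) = 0) :
    ∑ i, ∑ j, (vecMulVec α (fun _ => 1) + vecMulVec (fun _ => 1) β : Matrix m n R) i j * ξ i j = 0 := by
  simp only [add_apply, add_mul, Finset.sum_add_distrib, sum_sum_vecMulVec_mul,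
    dotProduct_mulVec, ← mulVec_transpose, hrow, hcol, dotProduct_zero, zero_dotProduct,
    add_zero]

end Matrix

theorem riemannian_gradient_doubly_stochastic_general (n : ℕ)
    (X : Matrix (Fin n) (Fin n) ℝ)
    (hXpos : ∀ i j, 0 < X i j)
    (G : Matrix (Fin n) (Fin n) ℝ) (α β : Fin n → ℝ) :
    ∀ ξ : Matrix (Fin n) (Fin n) ℝ,
      ξ.mulVec (fun _ => (1 : ℝ)) = 0 → ξᵀ.mulVec (fun _ => (1 : ℝ)) = 0 →
      ∑ i, ∑ j,
        ((Matrix.hadamard G X -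
          Matrix.hadamard
            (Matrix.vecMulVec α (fun _ => (1 : ℝ)) +
              Matrix.vecMulVec (fun _ => (1 : ℝ)) β) X) i j * ξ i j) / X i j
        = ∑ i, ∑ j, G i j * ξ i j := by
  intro ξ hrow hcol
  rw [← sub_hadamard, sum_sum_hadamard_mul_div (fun i j => (hXpos i j).ne')]
  simp only [Matrix.sub_apply, sub_mul, Finset.sum_sub_distrib,
    sum_sum_vecMulVec_add_vecMulVec_mul_eq_zero α β hrow hcol, sub_zero]

/-- The Riemannian gradient on `𝔻ℙ_n` is `grad f(X) = Π_X(Grad f(X) ⊙ X)`: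
with `α, β` solving the projection system for `Z = G ⊙ X`, the matrix
`grad = (G ⊙ X) − (α𝟙ᵀ + 𝟙βᵀ) ⊙ X` satisfies
`⟨grad, ξ⟩_X = Σ_{i,j} G_{ij} ξ_{ij}` for every tangent vector `ξ`. -/
theorem riemannian_gradient_doubly_stochastic (n : ℕ)
    (X : Matrix (Fin n) (Fin n) ℝ)
    (hXpos : ∀ i j, 0 < X i j)
    (hXrow : X.mulVec (fun _ => (1 : ℝ)) = fun _ => (1 : ℝ))
    (hXcol : Xᵀ.mulVec (fun _ => (1 : ℝ)) = fun _ => (1 : ℝ))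
    (G : Matrix (Fin n) (Fin n) ℝ) (α β : Fin n → ℝ)
    (hα : (Matrix.hadamard G X).mulVec (fun _ => (1 : ℝ)) = α + X.mulVec β)
    (hβ : (Matrix.hadamard G X)ᵀ.mulVec (fun _ => (1 : ℝ)) = Xᵀ.mulVec α + β) :
    ∀ ξ : Matrix (Fin n) (Fin n) ℝ,
      ξ.mulVec (fun _ => (1 : ℝ)) = 0 → ξᵀ.mulVec (fun _ => (1 : ℝ)) = 0 →
      ∑ i, ∑ j,
        ((Matrix.hadamard G X -
          Matrix.hadamard
            (Matrix.vecMulVec α (fun _ => (1 : ℝ)) +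
              Matrix.vecMulVec (fun _ => (1 : ℝ)) β) X) i j * ξ i j) / X i j
        = ∑ i, ∑ j, G i j * ξ i j :=
  riemannian_gradient_doubly_stochastic_general n X hXpos G α β
end

section
/- Let X ∈ 𝕊ℙ_n and let G ∈ ℝ^{n×n} be symmetric (the Euclidean gradient of an objective function at X). Set α = (I + X)⁻¹ (G ⊙ X)𝟙 and grad = (G ⊙ X) − (α𝟙ᵀ + 𝟙αᵀ) ⊙ X. Then for every symmetric ξ ∈ ℝ^{n×n} with ξ𝟙 = 0, the Fisher inner product ⟨grad, ξ⟩_X equals the Frobenius inner product Σ_{i,j} G_{ij} ξ_{ij}. -/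
/-!
Since `grad` is `G ⊙ X` corrected by `(α𝟙ᵀ + 𝟙αᵀ) ⊙ X`, dividing by `X` entrywise turns the Fisher
pairing with `ξ` into the Frobenius pairing of `G - (α𝟙ᵀ + 𝟙αᵀ)` with `ξ`. The correction term
pairs to `α ⬝ (ξ𝟙) + (𝟙ᵀξ) ⬝ α`, which vanishes because `ξ` is symmetric with zero row sums.
-/

open Matrix

theorem Matrix.sub_hadamard_s10 {m n R : Type*} [NonUnitalNonAssocRing R] (A B C : Matrix m n R) :
    (B - C) ⊙ A = B ⊙ A - C ⊙ A :=
  ext fun _ _ => sub_mul _ _ _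

section

variable {ι m n R : Type*} [Fintype ι] [Fintype m] [Fintype n]

theorem Matrix.sum_sum_vecMulVec_mul_s10 [CommSemiring R] (α : m → R) (β : n → R)
    (ξ : Matrix m n R) :
    ∑ i, ∑ j, vecMulVec α β i j * ξ i j = α ⬝ᵥ (ξ *ᵥ β) := by
  simp only [vecMulVec_apply, dotProduct, mulVec, Finset.mul_sum, mul_assoc, mul_comm (β _)]

theorem Matrix.sum_sum_vecMulVec_add_mul_eq_zero [CommSemiring R] (α : ι → R)
    {ξ : Matrix ι ι R} (hξsym : ξ = ξᵀ) (hξrow : ξ *ᵥ (fun _ => 1) = 0) :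
    ∑ i, ∑ j, (vecMulVec α (fun _ => (1 : R)) + vecMulVec (fun _ => 1) α : Matrix ι ι R) i j *
      ξ i j = 0 := by
  have hξcol : (fun _ => 1) ᵥ* ξ = 0 := by
    rw [← mulVec_transpose, ← hξsym, hξrow]
  simp only [Matrix.add_apply, add_mul, Finset.sum_add_distrib, sum_sum_vecMulVec_mul_s10,
    dotProduct_mulVec _ ξ α, hξrow, hξcol, dotProduct_zero, zero_dotProduct, add_zero]

theorem Matrix.sum_sum_hadamard_mul_div_s10 [Field R] {X : Matrix m n R} (hX : ∀ i j, X i j ≠ 0)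
    (M ξ : Matrix m n R) :
    ∑ i, ∑ j, ((M ⊙ X) i j * ξ i j) / X i j = ∑ i, ∑ j, M i j * ξ i j := by
  refine Finset.sum_congr rfl fun i _ => Finset.sum_congr rfl fun j _ => ?_
  rw [hadamard_apply, mul_right_comm, mul_div_cancel_right₀ _ (hX i j)]

end

theorem riemannian_gradient_symmetric_multinomial_general (n : ℕ)
    (X : Matrix (Fin n) (Fin n) ℝ)
    (hXpos : ∀ i j, 0 < X i j)
    (G : Matrix (Fin n) (Fin n) ℝ)
    (α : Fin n → ℝ) :
    ∀ ξ : Matrix (Fin n) (Fin n) ℝ, ξ = ξᵀ →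
      ξ.mulVec (fun _ => (1 : ℝ)) = 0 →
      ∑ i, ∑ j,
        ((Matrix.hadamard G X -
          Matrix.hadamard
            (Matrix.vecMulVec α (fun _ => (1 : ℝ)) +
              Matrix.vecMulVec (fun _ => (1 : ℝ)) α) X) i j * ξ i j) / X i j
        = ∑ i, ∑ j, G i j * ξ i j := by
  intro ξ hξsym hξrow
  rw [← sub_hadamard_s10, sum_sum_hadamard_mul_div_s10 (fun i j => (hXpos i j).ne')]
  simp only [Matrix.sub_apply, sub_mul, Finset.sum_sub_distrib,
    sum_sum_vecMulVec_add_mul_eq_zero α hξsym hξrow, sub_zero]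

/-- The Riemannian gradient on `𝕊ℙ_n`: with `α = (I + X)⁻¹ (G ⊙ X)𝟙` and
`grad = (G ⊙ X) − (α𝟙ᵀ + 𝟙αᵀ) ⊙ X`, one has
`⟨grad, ξ⟩_X = Σ_{i,j} G_{ij} ξ_{ij}` for every symmetric `ξ` with `ξ𝟙 = 0`. -/
theorem riemannian_gradient_symmetric_multinomial (n : ℕ)
    (X : Matrix (Fin n) (Fin n) ℝ)
    (hXpos : ∀ i j, 0 < X i j)
    (hXsym : X = Xᵀ)
    (hXrow : X.mulVec (fun _ => (1 : ℝ)) = fun _ => (1 : ℝ))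
    (G : Matrix (Fin n) (Fin n) ℝ) (hGsym : G = Gᵀ)
    (α : Fin n → ℝ)
    (hα : α = (1 + X)⁻¹.mulVec ((Matrix.hadamard G X).mulVec (fun _ => (1 : ℝ)))) :
    ∀ ξ : Matrix (Fin n) (Fin n) ℝ, ξ = ξᵀ →
      ξ.mulVec (fun _ => (1 : ℝ)) = 0 →
      ∑ i, ∑ j,
        ((Matrix.hadamard G X -
          Matrix.hadamard
            (Matrix.vecMulVec α (fun _ => (1 : ℝ)) +
              Matrix.vecMulVec (fun _ => (1 : ℝ)) α) X) i j * ξ i j) / X i j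
        = ∑ i, ∑ j, G i j * ξ i j :=
  riemannian_gradient_symmetric_multinomial_general n X hXpos G α
end
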